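/- arXiv:math/0509105 — 2 statements merged into one kernel-verified Lean document; each statement's English description precedes it below -/
import Mathlib

section
/- Let E be a vector space over a field k of characteristic zero, S(E) its symmetric algebra, and regard each linear functional f ∈ E* as an element of S(E)* by extending by zero on S^n(E) for n ≠ 1. With multiplication on S(E)* induced by the comultiplication Δ of S(E), one has for all f_1, …, f_m ∈ E* and e_1, …, e_n ∈ E: (f_1 ⋯ f_m)(e_n ⋯ e_1) = δ_{mn} Σ_{σ ∈ S_n} f_{σ(n)}(e_n) ⋯ f_{σ(1)}(e_1). -/
/-! Statement 5: in `S(E)*` (with multiplication induced by the comultiplication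
`Δ` of the symmetric algebra `S(E)`), for `f₁, …, f_m ∈ E*` (extended by zero to
`S(E)`) and `e₁, …, e_n ∈ E` we have
`(f₁ ⋯ f_m)(e_n ⋯ e₁) = δ_{mn} Σ_{σ ∈ S_n} ∏ᵢ f_{σ(i)}(eᵢ)`. -/

open TensorProduct

open Equiv Finset Matrix in
theorem Matrix.permanent_succ_column_zero' {R : Type*} [CommSemiring R] {n : ℕ}
    (A : Matrix (Fin n.succ) (Fin n.succ) R) :
    permanent A = ∑ i : Fin n.succ, A i 0 * permanent (A.submatrix i.succAbove Fin.succ) := by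
  rw [permanent, Finset.univ_perm_fin_succ, ← Finset.univ_product_univ]
  simp only [Finset.sum_map, Equiv.toEmbedding_apply, Finset.sum_product]
  refine Finset.sum_congr rfl fun i _ => Fin.cases ?_ (fun i => ?_) i
  · simp [Fin.prod_univ_succ, permanent, Finset.mul_sum,
      Equiv.Perm.decomposeFin_symm_apply_zero, Equiv.Perm.decomposeFin_symm_apply_succ,
      Fin.succAbove_zero]
  · rw [permanent, Finset.mul_sum,
      ← (Group.mulLeft_bijective i.cycleRange).sum_comp
        (fun σ => A i.succ 0 * ∏ j, (A.submatrix i.succ.succAbove Fin.succ) (σ j) j)]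
    refine Finset.sum_congr rfl fun σ _ => ?_
    rw [Fin.prod_univ_succ]
    simp [Equiv.Perm.decomposeFin_symm_apply_zero, Equiv.Perm.decomposeFin_symm_apply_succ,
      Fin.succAbove_cycleRange, Matrix.submatrix_apply]

open Equiv Finset Matrix in
theorem Matrix.permanent_succ_row_zero' {R : Type*} [CommSemiring R] {n : ℕ}
    (A : Matrix (Fin n.succ) (Fin n.succ) R) :
    permanent A = ∑ j : Fin n.succ, A 0 j * permanent (A.submatrix Fin.succ j.succAbove) := by
  rw [← permanent_transpose A, Matrix.permanent_succ_column_zero']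
  refine Finset.sum_congr rfl fun i _ => ?_
  rw [← permanent_transpose (A.submatrix Fin.succ i.succAbove)]
  simp [transpose_submatrix]

noncomputable section

variable (k : Type*) [Field k] [CharZero k]
variable (S : Type*) [CommRing S] [Algebra k S]

/-- The product on `S(E)* = Module.Dual k S` induced by a comultiplication `Δ`:
`(f·s)(u) = Σ f(aᵢ) s(bᵢ)` where `Δ u = Σ aᵢ ⊗ bᵢ`. -/
def dualMul (Δ : S →ₐ[k] S ⊗[k] S) (f s : Module.Dual k S) : Module.Dual k S :=
  (TensorProduct.lid k k).toLinearMap ∘ₗ (TensorProduct.map f s) ∘ₗ Δ.toLinearMap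

omit [CharZero k] in
theorem dualMul_apply_prod
    {E : Type*} [AddCommGroup E] [Module k E] (ιS : E →ₗ[k] S)
    (Δ : S →ₐ[k] S ⊗[k] S)
    (hΔ : ∀ x : E, Δ (ιS x) = ιS x ⊗ₜ 1 + 1 ⊗ₜ ιS x)
    (Fj : Module.Dual k S) (fj : Module.Dual k E)
    (hF1 : Fj 1 = 0) (hFι : ∀ x : E, Fj (ιS x) = fj x)
    (hF2 : ∀ (x y : E) (s : S), Fj (ιS x * ιS y * s) = 0)
    (G : Module.Dual k S) {n : ℕ} (e : Fin n → E) :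
    dualMul k S Δ Fj G (∏ i, ιS (e i)) =
      ∑ i, fj (e i) * G (∏ j ∈ Finset.univ \ {i}, ιS (e j)) := by
  classical
  have hvanish : ∀ T : Finset (Fin n), T.card ≠ 1 → Fj (∏ i ∈ T, ιS (e i)) = 0 := by
    intro T hT
    rcases Nat.lt_or_ge T.card 1 with h | h
    · have : T = ∅ := Finset.card_eq_zero.mp (Nat.lt_one_iff.mp h)
      simp [this, hF1]
    · have h2 : 1 < T.card := lt_of_le_of_ne h (Ne.symm hT)
      obtain ⟨x, hx, y, hy, hxy⟩ := Finset.one_lt_card.mp h2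
      have hy' : y ∈ T.erase x := Finset.mem_erase.mpr ⟨fun h => hxy h.symm, hy⟩
      rw [← Finset.mul_prod_erase T _ hx, ← Finset.mul_prod_erase _ _ hy', ← mul_assoc]
      exact hF2 (e x) (e y) _
  have hΔprod : Δ (∏ i, ιS (e i)) =
      ∑ T ∈ (Finset.univ : Finset (Fin n)).powerset,
        (∏ i ∈ T, ιS (e i)) ⊗ₜ[k] (∏ i ∈ Finset.univ \ T, ιS (e i)) := by
    rw [map_prod]
    simp only [hΔ]
    rw [Finset.prod_add]
    refine Finset.sum_congr rfl fun T _ => ?_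
    have h1 : (∏ i ∈ T, (ιS (e i) ⊗ₜ[k] (1 : S))) = (∏ i ∈ T, ιS (e i)) ⊗ₜ[k] 1 :=
      (map_prod (Algebra.TensorProduct.includeLeft : S →ₐ[k] S ⊗[k] S)
        (fun i => ιS (e i)) T).symm
    have h2 : (∏ i ∈ Finset.univ \ T, ((1 : S) ⊗ₜ[k] ιS (e i))) =
        (1 : S) ⊗ₜ[k] (∏ i ∈ Finset.univ \ T, ιS (e i)) :=
      (map_prod (Algebra.TensorProduct.includeRight : S →ₐ[k] S ⊗[k] S)
        (fun i => ιS (e i)) _).symm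
    rw [h1, h2, Algebra.TensorProduct.tmul_mul_tmul, mul_one, one_mul]
  have key : dualMul k S Δ Fj G (∏ i, ιS (e i)) =
      ∑ T ∈ (Finset.univ : Finset (Fin n)).powerset,
        Fj (∏ i ∈ T, ιS (e i)) * G (∏ i ∈ Finset.univ \ T, ιS (e i)) := by
    rw [dualMul]
    simp only [LinearMap.coe_comp, Function.comp_apply, AlgHom.toLinearMap_apply,
      LinearEquiv.coe_coe]
    rw [hΔprod, map_sum, map_sum]
    simp [TensorProduct.map_tmul, TensorProduct.lid_tmul, smul_eq_mul]
  rw [key]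
  rw [← Finset.sum_filter_of_ne (p := fun T : Finset (Fin n) => T.card = 1)
    (fun T _ hne => by
      by_contra h
      exact hne (by rw [hvanish T h, zero_mul]))]
  rw [← Finset.powersetCard_eq_filter, Finset.powersetCard_one]
  rw [Finset.sum_map]
  refine Finset.sum_congr rfl fun i _ => ?_
  simp [hFι]

theorem dual_symmetric_algebra_pairing
    (E : Type*) [AddCommGroup E] [Module k E] (ιS : E →ₗ[k] S)
    -- `(S, ιS)` is the symmetric algebra of `E`: universal property
    (huniv : ∀ (A : Type*) [CommRing A] [Algebra k A] (f : E →ₗ[k] A),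
      ∃! F : S →ₐ[k] A, ∀ x : E, F (ιS x) = f x)
    -- `Δ` is the comultiplication of `S(E)`, `ε` its counit
    (Δ : S →ₐ[k] S ⊗[k] S)
    (hΔ : ∀ x : E, Δ (ιS x) = ιS x ⊗ₜ 1 + 1 ⊗ₜ ιS x)
    (ε : S →ₐ[k] k) (hε : ∀ x : E, ε (ιS x) = 0)
    (m n : ℕ) (f : Fin m → Module.Dual k E)
    -- `F j ∈ S(E)*` is `f j ∈ E*` extended by zero on `S^i(E)`, `i ≠ 1`
    (F : Fin m → Module.Dual k S)
    (hF1 : ∀ j, F j 1 = 0)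
    (hFι : ∀ j (x : E), F j (ιS x) = f j x)
    (hF2 : ∀ j (x y : E) (s : S), F j (ιS x * ιS y * s) = 0)
    (e : Fin n → E) :
    ((List.ofFn F).foldr (dualMul k S Δ) ε.toLinearMap) (∏ i, ιS (e i)) =
      if hmn : m = n then
        ∑ σ : Equiv.Perm (Fin n), ∏ i, f (Fin.cast hmn.symm (σ i)) (e i)
      else 0 := by
  classical
  induction m generalizing n e with
  | zero =>
    simp only [List.ofFn_zero, List.foldr_nil]
    cases n with
    | zero =>
      rw [dif_pos rfl]
      simp [AlgHom.toLinearMap_apply]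
    | succ n' =>
      rw [dif_neg (by omega)]
      have : ε (∏ i, ιS (e i)) = 0 := by
        rw [map_prod]
        exact Finset.prod_eq_zero (Finset.mem_univ 0) (hε _)
      simpa [AlgHom.toLinearMap_apply] using this
  | succ m ih =>
    rw [List.ofFn_succ, List.foldr_cons]
    rw [dualMul_apply_prod k S ιS Δ hΔ (F 0) (f 0) (hF1 0) (hFι 0) (hF2 0) _ e]
    cases n with
    | zero =>
      rw [dif_neg (by omega)]
      simp
    | succ n' =>
      have hprod : ∀ i : Fin (n' + 1),
          (∏ j ∈ Finset.univ \ {i}, ιS (e j)) =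
            ∏ j : Fin n', ιS ((fun j => e (i.succAbove j)) j) := by
        intro i
        rw [← Finset.compl_eq_univ_sdiff, ← Fin.image_succAbove_univ i,
          Finset.prod_image (fun a _ b _ h => Fin.succAbove_right_injective h)]
      have step : ∀ i : Fin (n' + 1),
          ((List.ofFn fun j => F j.succ).foldr (dualMul k S Δ) ε.toLinearMap)
              (∏ j ∈ Finset.univ \ {i}, ιS (e j)) =
            if hmn : m = n' then
              ∑ σ : Equiv.Perm (Fin n'), ∏ j, f (Fin.cast hmn.symm (σ j)).succ
                (e (i.succAbove j))
            else 0 := by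
        intro i
        rw [hprod i, ih n' (fun j => f j.succ) (fun j => F j.succ) (fun j => hF1 j.succ)
          (fun j x => hFι j.succ x) (fun j x y s => hF2 j.succ x y s)
          (fun j => e (i.succAbove j))]
      simp only [step]
      by_cases hmn : m = n'
      · subst hmn
        rw [dif_pos rfl]
        have hcast : ∀ (h : m + 1 = m + 1) (x : Fin (m + 1)), Fin.cast h x = x :=
          fun _ _ => rfl
        have hcast' : ∀ (h : m = m) (x : Fin m), Fin.cast h x = x := fun _ _ => rfl
        simp only [dif_pos rfl, hcast, hcast']
        set M : Matrix (Fin (m + 1)) (Fin (m + 1)) k :=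
          Matrix.of fun r c => f r (e c) with hM
        have hL : (∑ σ : Equiv.Perm (Fin (m + 1)), ∏ i, f (σ i) (e i)) = M.permanent := rfl
        rw [hL, Matrix.permanent_succ_row_zero' M]
        refine Finset.sum_congr rfl fun i _ => ?_
        congr 1
      · rw [dif_neg (by omega)]
        simp only [dif_neg hmn, mul_zero, Finset.sum_const_zero]

end
end

section
/- Let R be a commutative ℚ-algebra, A an associative unital R-algebra, ε ∈ R with ε² = 0, and a, b ∈ A with a nilpotent. Then exp(a)·exp(εb) = exp(a + ε·F(b)), where F = (-ad a)/(exp(-ad a) − 1) is the operator given by the power series Σ_{n≥0} (b_n/n!) (-ad a)^n with b_n the Bernoulli numbers (a finite sum since ad a is nilpotent). -/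
/-! Statement 13: for `ε ∈ R` with `ε² = 0` and nilpotent `a`:
`exp(a)·exp(εb) = exp(a + ε·F(b))` where
`F = (-ad a)/(exp(-ad a) − 1) = Σ (bₙ/n!)(-ad a)ⁿ` with `bₙ` the Bernoulli
numbers (a finite sum, `ad a` being nilpotent). -/

noncomputable section

variable {R : Type*} [CommRing R] [Algebra ℚ R]
variable {A : Type*} [Ring A] [Algebra R A]

/-- The truncated exponential `Σ_{i<m} xⁱ/i!` (equal to `exp x` whenever
`x^m = 0`). -/
def texp (m : ℕ) (x : A) : A :=
  ∑ i ∈ Finset.range m, (algebraMap ℚ R (i.factorial : ℚ)⁻¹) • x ^ i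

/-- `(-ad a)` as a map `A → A`: `x ↦ x·a − a·x`. -/
def negAd (a : A) : A → A := fun x => x * a - a * x

open Finset

/-- Hockey stick identity. -/
private lemma hockey (i t : ℕ) : ∑ k ∈ range i, k.choose t = i.choose (t + 1) := by
  induction i with
  | zero => simp
  | succ i ih =>
    rw [Finset.sum_range_succ, ih, Nat.choose_succ_succ]
    exact Nat.add_comm _ _

/-- The Bernoulli convolution identity `(e^z-1)/z · z/(e^z-1) = 1`. -/
private lemma hbern (k : ℕ) :
    (∑ p ∈ range (k + 1),
        (((p + 1).factorial : ℚ))⁻¹ * (bernoulli (k - p) / ((k - p).factorial : ℚ)))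
      = if k = 0 then 1 else 0 := by
  have h1 : ∀ p ∈ range (k + 1),
      (((p + 1).factorial : ℚ))⁻¹ * (bernoulli (k - p) / ((k - p).factorial : ℚ))
        = (((k + 1).factorial : ℚ))⁻¹ * (((k + 1).choose (k - p) : ℚ) * bernoulli (k - p)) := by
    intro p hp
    have hp' : p ≤ k := Nat.lt_succ_iff.mp (Finset.mem_range.mp hp)
    have hc := Nat.choose_mul_factorial_mul_factorial (show k - p ≤ k + 1 by omega)
    rw [show k + 1 - (k - p) = p + 1 by omega] at hc
    have hcq : ((k + 1).choose (k - p) : ℚ) * ((k - p).factorial : ℚ) * ((p + 1).factorial : ℚ)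
        = ((k + 1).factorial : ℚ) := by exact_mod_cast hc
    have f1 : ((p + 1).factorial : ℚ) ≠ 0 := Nat.cast_ne_zero.mpr (Nat.factorial_ne_zero _)
    have f2 : (((k - p)).factorial : ℚ) ≠ 0 := Nat.cast_ne_zero.mpr (Nat.factorial_ne_zero _)
    have f3 : (((k + 1)).factorial : ℚ) ≠ 0 := Nat.cast_ne_zero.mpr (Nat.factorial_ne_zero _)
    field_simp
    linear_combination (-(bernoulli (k - p))) * hcq
  rw [Finset.sum_congr rfl h1, ← Finset.mul_sum]
  have h2 : (∑ p ∈ range (k + 1), (((k + 1).choose (k - p) : ℚ) * bernoulli (k - p)))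
      = ∑ j ∈ range (k + 1), (((k + 1).choose j : ℚ) * bernoulli j) := by
    rw [← Finset.sum_range_reflect (fun j => (((k + 1).choose j : ℚ) * bernoulli j)) (k + 1)]
    refine Finset.sum_congr rfl fun p hp => ?_
    have hp' : p ≤ k := Nat.lt_succ_iff.mp (Finset.mem_range.mp hp)
    rw [show k + 1 - 1 - p = k - p by omega]
  rw [h2, sum_bernoulli]
  rcases Nat.eq_zero_or_pos k with rfl | hk
  · norm_num
  · rw [if_neg (by omega), if_neg (by omega), mul_zero]

private lemma aeval_vanish {S : Type*} [Ring S] [Algebra R S] (u : S) (d : ℕ)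
    (hd : u ^ d = 0) (W : Polynomial R) (hW : ∀ k, k < d → W.coeff k = 0) :
    Polynomial.aeval u W = 0 := by
  rw [Polynomial.aeval_eq_sum_range]
  refine Finset.sum_eq_zero fun i _ => ?_
  rcases lt_or_ge i d with h | h
  · rw [hW i h, zero_smul]
  · have hz : u ^ i = 0 := by rw [← Nat.sub_add_cancel h, pow_add, hd, mul_zero]
    rw [hz, smul_zero]

private lemma conv_one {S : Type*} [Ring S] [Algebra R S] (u : S) (d N : ℕ)
    (hd : u ^ d = 0) (hdN : d ≤ N) (c g : ℕ → ℚ)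
    (hcg : ∀ k, k < d → (∑ p ∈ range (k + 1), c p * g (k - p)) = if k = 0 then 1 else 0) :
    (∑ t ∈ range N, algebraMap ℚ R (c t) • u ^ t) *
      (∑ s ∈ range N, algebraMap ℚ R (g s) • u ^ s) = 1 := by
  set P : Polynomial R := ∑ t ∈ range N, Polynomial.C (algebraMap ℚ R (c t)) * Polynomial.X ^ t
    with hP
  set Q : Polynomial R := ∑ s ∈ range N, Polynomial.C (algebraMap ℚ R (g s)) * Polynomial.X ^ s
    with hQ
  have hPc : ∀ k, P.coeff k = if k < N then algebraMap ℚ R (c k) else 0 := by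
    intro k
    rw [hP, Polynomial.finset_sum_coeff]
    simp only [Polynomial.coeff_C_mul_X_pow]
    rw [Finset.sum_ite_eq (range N) k (fun t => algebraMap ℚ R (c t))]
    simp [Finset.mem_range]
  have hQc : ∀ k, Q.coeff k = if k < N then algebraMap ℚ R (g k) else 0 := by
    intro k
    rw [hQ, Polynomial.finset_sum_coeff]
    simp only [Polynomial.coeff_C_mul_X_pow]
    rw [Finset.sum_ite_eq (range N) k (fun t => algebraMap ℚ R (g t))]
    simp [Finset.mem_range]
  have hPa : Polynomial.aeval u P = ∑ t ∈ range N, algebraMap ℚ R (c t) • u ^ t := by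
    rw [hP, map_sum]
    refine Finset.sum_congr rfl fun t _ => ?_
    rw [map_mul, Polynomial.aeval_C, map_pow, Polynomial.aeval_X, ← Algebra.smul_def,
      ← IsScalarTower.algebraMap_smul R (algebraMap ℚ R (c t)) (u ^ t)]
  have hQa : Polynomial.aeval u Q = ∑ s ∈ range N, algebraMap ℚ R (g s) • u ^ s := by
    rw [hQ, map_sum]
    refine Finset.sum_congr rfl fun t _ => ?_
    rw [map_mul, Polynomial.aeval_C, map_pow, Polynomial.aeval_X, ← Algebra.smul_def,
      ← IsScalarTower.algebraMap_smul R (algebraMap ℚ R (g t)) (u ^ t)]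
  have hkey : Polynomial.aeval u (P * Q - 1) = 0 := by
    refine aeval_vanish u d hd _ fun k hk => ?_
    rw [Polynomial.coeff_sub, Polynomial.coeff_mul, Polynomial.coeff_one,
      Finset.Nat.sum_antidiagonal_eq_sum_range_succ_mk]
    have hterm : ∀ p ∈ range (k + 1), P.coeff p * Q.coeff (k - p)
        = algebraMap ℚ R (c p * g (k - p)) := by
      intro p hp
      have hp' : p ≤ k := Nat.lt_succ_iff.mp (Finset.mem_range.mp hp)
      rw [hPc, hQc, if_pos (by omega), if_pos (by omega), ← map_mul]
    rw [Finset.sum_congr rfl hterm, ← map_sum, hcg k hk]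
    split_ifs <;> simp
  rw [map_sub, map_one, map_mul, hPa, hQa, sub_eq_zero] at hkey
  exact hkey

/-- The core identity in a commutative algebra:
`E(x) = ((E(x) - E(y))/(x - y)) * (z/(eᶻ-1))(y - x)` for nilpotent `x`, `y`. -/
private lemma core {S : Type*} [CommRing S] [Algebra R S] {n : ℕ} (hn : 1 ≤ n)
    {x y : S} (hx : x ^ n = 0) (hy : y ^ n = 0) :
    (∑ i ∈ range (2 * n + 1), algebraMap ℚ R ((i.factorial : ℚ))⁻¹ •
        ∑ j ∈ range i, x ^ j * y ^ (i - 1 - j)) *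
      (∑ s ∈ range (2 * n), algebraMap ℚ R (bernoulli s / (s.factorial : ℚ)) • (y - x) ^ s)
    = ∑ i ∈ range (2 * n + 1), algebraMap ℚ R ((i.factorial : ℚ))⁻¹ • x ^ i := by
  have hx' : ∀ k, n ≤ k → x ^ k = 0 := fun k hk => by
    rw [← Nat.sub_add_cancel hk, pow_add, hx, mul_zero]
  have hy' : ∀ k, n ≤ k → y ^ k = 0 := fun k hk => by
    rw [← Nat.sub_add_cancel hk, pow_add, hy, mul_zero]
  set u : S := y - x with hu
  have hvan : ∀ w t, 2 * n - 1 ≤ w + t → x ^ w * u ^ t = 0 := by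
    intro w t hwt
    rw [hu, sub_eq_add_neg, add_pow, Finset.mul_sum]
    refine Finset.sum_eq_zero fun k hk => ?_
    have hk' : k ≤ t := Nat.lt_succ_iff.mp (Finset.mem_range.mp hk)
    rcases le_or_gt n k with h | h
    · rw [hy' k h]; ring
    · have h2 : x ^ w * (y ^ k * (-x) ^ (t - k) * (t.choose k : S))
          = (y ^ k * (-1 : S) ^ (t - k) * (t.choose k : S)) * x ^ (w + (t - k)) := by
        rw [neg_pow, pow_add]; ring
      rw [h2, hx' _ (by omega), mul_zero]
  set f : ℕ → ℕ → S := fun w t =>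
    algebraMap ℚ R (((w.factorial : ℚ) * ((t + 1).factorial : ℚ)))⁻¹ • (x ^ w * u ^ t) with hf
  have hfvan : ∀ w t, 2 * n - 1 ≤ w + t → f w t = 0 := fun w t h => by
    rw [hf]; dsimp only; rw [hvan w t h, smul_zero]
  -- Step A: rewrite each inner sum via the binomial theorem and the hockey stick
  have stepA : ∀ i ∈ range (2 * n + 1),
      algebraMap ℚ R ((i.factorial : ℚ))⁻¹ • ∑ j ∈ range i, x ^ j * y ^ (i - 1 - j)
        = ∑ t ∈ range i, f (i - 1 - t) t := by
    intro i _
    have inner : ∀ j ∈ range i, x ^ j * y ^ (i - 1 - j)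
        = ∑ t ∈ range i, (i - 1 - j).choose t • (x ^ (i - 1 - t) * u ^ t) := by
      intro j hj
      have hj' : j < i := Finset.mem_range.mp hj
      have hyy : y ^ (i - 1 - j)
          = ∑ t ∈ range (i - 1 - j + 1), u ^ t * x ^ (i - 1 - j - t)
              * ((i - 1 - j).choose t : S) := by
        conv_lhs => rw [show y = u + x by rw [hu]; ring]
        rw [add_pow]
      rw [hyy, Finset.mul_sum]
      have hterm : ∀ t ∈ range (i - 1 - j + 1),
          x ^ j * (u ^ t * x ^ (i - 1 - j - t) * ((i - 1 - j).choose t : S))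
            = (i - 1 - j).choose t • (x ^ (i - 1 - t) * u ^ t) := by
        intro t ht
        have ht' : t ≤ i - 1 - j := Nat.lt_succ_iff.mp (Finset.mem_range.mp ht)
        rw [nsmul_eq_mul]
        have hxx : x ^ j * x ^ (i - 1 - j - t) = x ^ (i - 1 - t) := by
          rw [← pow_add]; congr 1; omega
        calc x ^ j * (u ^ t * x ^ (i - 1 - j - t) * ((i - 1 - j).choose t : S))
            = ((i - 1 - j).choose t : S) * ((x ^ j * x ^ (i - 1 - j - t)) * u ^ t) := by ring
          _ = _ := by rw [hxx]
      rw [Finset.sum_congr rfl hterm]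
      refine Finset.sum_subset ?_ ?_
      · intro t ht; simp only [Finset.mem_range] at ht ⊢; omega
      · intro t _ htn
        simp only [Finset.mem_range, not_lt] at htn
        rw [Nat.choose_eq_zero_of_lt (by omega), zero_smul]
    rw [Finset.sum_congr rfl inner, Finset.sum_comm]
    have collect : ∀ t ∈ range i,
        (∑ j ∈ range i, (i - 1 - j).choose t • (x ^ (i - 1 - t) * u ^ t))
          = (i.choose (t + 1)) • (x ^ (i - 1 - t) * u ^ t) := by
      intro t _
      rw [← Finset.sum_smul]
      congr 1
      rw [Finset.sum_range_reflect (fun k => k.choose t) i, hockey]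
    rw [Finset.sum_congr rfl collect, Finset.smul_sum]
    refine Finset.sum_congr rfl fun t ht => ?_
    have ht' : t < i := Finset.mem_range.mp ht
    rw [← Nat.cast_smul_eq_nsmul R ((i.choose (t + 1))) (x ^ (i - 1 - t) * u ^ t),
      smul_smul, hf]
    dsimp only
    rw [← map_natCast (algebraMap ℚ R) (i.choose (t + 1)), ← map_mul]
    congr 2
    have hc := Nat.choose_mul_factorial_mul_factorial (show t + 1 ≤ i by omega)
    rw [show i - (t + 1) = i - 1 - t by omega] at hc
    have hcq : (i.choose (t + 1) : ℚ) * ((t + 1).factorial : ℚ) * ((i - 1 - t).factorial : ℚ)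
        = (i.factorial : ℚ) := by exact_mod_cast hc
    have f1 : ((t + 1).factorial : ℚ) ≠ 0 := Nat.cast_ne_zero.mpr (Nat.factorial_ne_zero _)
    have f2 : ((i - 1 - t).factorial : ℚ) ≠ 0 := Nat.cast_ne_zero.mpr (Nat.factorial_ne_zero _)
    have f3 : ((i).factorial : ℚ) ≠ 0 := Nat.cast_ne_zero.mpr (Nat.factorial_ne_zero _)
    field_simp
    linear_combination hcq
  -- Step A3: triangle reindexing to a rectangle
  have tri : ∑ i ∈ range (2 * n + 1), ∑ t ∈ range i, f (i - 1 - t) t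
      = ∑ w ∈ range (2 * n + 1), ∑ t ∈ range (2 * n), f w t := by
    have h1 : ∀ i ∈ range (2 * n + 1),
        (∑ t ∈ range i, f (i - 1 - t) t) = ∑ j ∈ range i, f j (i - 1 - j) := by
      intro i _
      rw [← Finset.sum_range_reflect (fun t => f (i - 1 - t) t) i]
      refine Finset.sum_congr rfl fun j hj => ?_
      rw [show i - 1 - (i - 1 - j) = j by have := Finset.mem_range.mp hj; omega]
    rw [Finset.sum_congr rfl h1]
    have h2 : ∀ i ∈ range (2 * n + 1), (∑ j ∈ range i, f j (i - 1 - j))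
        = ∑ j ∈ range (2 * n + 1), if j < i then f j (i - 1 - j) else 0 := by
      intro i hi
      have hfil : Finset.filter (fun j => j < i) (range (2 * n + 1)) = range i := by
        ext z
        simp only [Finset.mem_filter, Finset.mem_range]
        have := Finset.mem_range.mp hi
        omega
      rw [← hfil, Finset.sum_filter]
    rw [Finset.sum_congr rfl h2, Finset.sum_comm]
    refine Finset.sum_congr rfl fun j hj => ?_
    have hj' : j < 2 * n + 1 := Finset.mem_range.mp hj
    have hfil : Finset.filter (fun i => j < i) (range (2 * n + 1))
        = Finset.Ico (j + 1) (2 * n + 1) := by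
      ext z
      simp only [Finset.mem_filter, Finset.mem_range, Finset.mem_Ico]
      omega
    rw [← Finset.sum_filter, hfil, Finset.sum_Ico_eq_sum_range]
    have hsimp : ∀ t ∈ range (2 * n + 1 - (j + 1)), f j (j + 1 + t - 1 - j) = f j t := by
      intro t _; rw [show j + 1 + t - 1 - j = t by omega]
    rw [Finset.sum_congr rfl hsimp]
    rw [show 2 * n + 1 - (j + 1) = 2 * n - j by omega]
    refine Finset.sum_subset ?_ ?_
    · intro t ht; simp only [Finset.mem_range] at ht ⊢; omega
    · intro t ht htn
      simp only [Finset.mem_range, not_lt] at ht htn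
      exact hfvan j t (by omega)
  -- Step A4: the rectangle sum is a product of two sums
  have rect : (∑ w ∈ range (2 * n + 1), algebraMap ℚ R ((w.factorial : ℚ))⁻¹ • x ^ w) *
      (∑ t ∈ range (2 * n), algebraMap ℚ R (((t + 1).factorial : ℚ))⁻¹ • u ^ t)
      = ∑ w ∈ range (2 * n + 1), ∑ t ∈ range (2 * n), f w t := by
    rw [Finset.sum_mul_sum]
    refine Finset.sum_congr rfl fun w _ => Finset.sum_congr rfl fun t _ => ?_
    rw [smul_mul_smul_comm, ← map_mul, hf]
    dsimp only
    rw [mul_inv]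
  -- Step B: the Bernoulli series is inverse to `(e^u - 1)/u`
  have hu2 : u ^ (2 * n - 1) = 0 := by
    have h0 := hvan 0 (2 * n - 1) (by omega)
    simpa using h0
  have hB : (∑ t ∈ range (2 * n), algebraMap ℚ R (((t + 1).factorial : ℚ))⁻¹ • u ^ t) *
      (∑ s ∈ range (2 * n), algebraMap ℚ R (bernoulli s / (s.factorial : ℚ)) • u ^ s) = 1 := by
    refine conv_one u (2 * n - 1) (2 * n) hu2 (by omega)
      (fun t => (((t + 1).factorial : ℚ))⁻¹) (fun s => bernoulli s / (s.factorial : ℚ))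
      (fun k _ => hbern k)
  rw [Finset.sum_congr rfl stepA, tri, ← rect, mul_assoc, hB, mul_one]

theorem exp_mul_exp_eps_eq_exp_bernoulli
    (ε : R) (hε : ε * ε = 0) (a b : A) (n : ℕ) (hn : a ^ n = 0) :
    texp (R := R) (2 * n + 1) a * (1 + ε • b) =
      texp (R := R) (2 * n + 1)
        (a + ε • ∑ i ∈ Finset.range (2 * n),
          (algebraMap ℚ R (bernoulli i / (i.factorial : ℚ))) • (negAd a)^[i] b) := by
  rcases Nat.eq_zero_or_pos n with rfl | hn1
  · have h01 : (0 : A) = 1 := by simpa using hn.symm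
    exact eq_of_zero_eq_one h01 _ _
  set c : A := ∑ i ∈ Finset.range (2 * n),
    (algebraMap ℚ R (bernoulli i / (i.factorial : ℚ))) • (negAd a)^[i] b with hc
  -- expansion of `(a + ε•c)^i` using `ε² = 0`
  have hpow : ∀ i : ℕ, (a + ε • c) ^ i
      = a ^ i + ε • ∑ j ∈ Finset.range i, a ^ j * c * a ^ (i - 1 - j) := by
    intro i
    induction i with
    | zero => simp
    | succ i ih =>
      rw [pow_succ, ih, add_mul, mul_add, mul_add, smul_mul_smul_comm, hε, zero_smul,
        add_zero, mul_smul_comm, smul_mul_assoc, ← pow_succ, add_assoc, ← smul_add]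
      congr 1
      congr 1
      rw [Finset.sum_range_succ]
      have hlast : a ^ i * c * a ^ (i + 1 - 1 - i) = a ^ i * c := by
        rw [show i + 1 - 1 - i = 0 by omega, pow_zero, mul_one]
      rw [hlast, Finset.sum_mul, add_comm]
      congr 1
      refine Finset.sum_congr rfl fun j hj => ?_
      have hj' : j < i := Finset.mem_range.mp hj
      rw [mul_assoc (a ^ j * c), ← pow_succ, show i - 1 - j + 1 = i + 1 - 1 - j by omega]
  -- the main identity, via the commutative subalgebra of `Module.End R A`
  -- generated by left and right multiplication by `a`
  have hmain : texp (R := R) (2 * n + 1) a * b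
      = ∑ i ∈ Finset.range (2 * n + 1), algebraMap ℚ R ((i.factorial : ℚ))⁻¹ •
          ∑ j ∈ Finset.range i, a ^ j * c * a ^ (i - 1 - j) := by
    set l : Module.End R A := LinearMap.mulLeft R a with hldef
    set r : Module.End R A := LinearMap.mulRight R a with hrdef
    have hlr : l * r = r * l := LinearMap.commute_mulLeft_right a a
    have hcomm : ∀ z ∈ ({l, r} : Set (Module.End R A)),
        ∀ w ∈ ({l, r} : Set (Module.End R A)), z * w = w * z := by
      intro z hz w hw
      rcases Set.mem_insert_iff.mp hz with rfl | hz <;>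
        rcases Set.mem_insert_iff.mp hw with rfl | hw
      · rfl
      · rw [Set.mem_singleton_iff] at hw; subst hw; exact hlr
      · rw [Set.mem_singleton_iff] at hz; subst hz; exact hlr.symm
      · rw [Set.mem_singleton_iff] at hz hw; subst hz; subst hw; rfl
    letI : CommRing (Algebra.adjoin R ({l, r} : Set (Module.End R A))) :=
      Algebra.adjoinCommRingOfComm R hcomm
    set x : Algebra.adjoin R ({l, r} : Set (Module.End R A)) :=
      ⟨l, Algebra.subset_adjoin (Set.mem_insert _ _)⟩ with hxdef
    set y : Algebra.adjoin R ({l, r} : Set (Module.End R A)) :=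
      ⟨r, Algebra.subset_adjoin (Set.mem_insert_of_mem _ rfl)⟩ with hydef
    have hxn : x ^ n = 0 := by
      apply Subtype.ext
      rw [SubmonoidClass.coe_pow, ZeroMemClass.coe_zero]
      show l ^ n = 0
      rw [hldef, LinearMap.pow_mulLeft, hn, LinearMap.mulLeft_zero_eq_zero]
    have hyn : y ^ n = 0 := by
      apply Subtype.ext
      rw [SubmonoidClass.coe_pow, ZeroMemClass.coe_zero]
      show r ^ n = 0
      rw [hrdef, LinearMap.pow_mulRight, hn, LinearMap.mulRight_zero_eq_zero]
    have hcore := core (R := R) hn1 hxn hyn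
    have hEnd := congrArg (Subtype.val) hcore
    simp only [MulMemClass.coe_mul, AddSubmonoidClass.coe_finset_sum, SubmonoidClass.coe_pow,
      AddSubgroupClass.coe_sub, Subalgebra.coe_smul] at hEnd
    -- apply the endomorphism identity to `b`
    have happ := DFunLike.congr_fun hEnd b
    have hfun : ⇑(r - l) = negAd a := by
      funext z
      simp only [LinearMap.sub_apply, hrdef, hldef, LinearMap.mulRight_apply,
        LinearMap.mulLeft_apply, negAd]
    have hGb : (∑ s ∈ Finset.range (2 * n),
        algebraMap ℚ R (bernoulli s / (s.factorial : ℚ)) • (r - l) ^ s) b = c := by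
      rw [LinearMap.sum_apply, hc]
      refine Finset.sum_congr rfl fun s _ => ?_
      rw [LinearMap.smul_apply, Module.End.pow_apply, hfun]
    rw [Module.End.mul_apply, hGb] at happ
    have hMc : (∑ i ∈ Finset.range (2 * n + 1), algebraMap ℚ R ((i.factorial : ℚ))⁻¹ •
        ∑ j ∈ Finset.range i, l ^ j * r ^ (i - 1 - j)) c
        = ∑ i ∈ Finset.range (2 * n + 1), algebraMap ℚ R ((i.factorial : ℚ))⁻¹ •
            ∑ j ∈ Finset.range i, a ^ j * c * a ^ (i - 1 - j) := by
      rw [LinearMap.sum_apply]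
      refine Finset.sum_congr rfl fun i _ => ?_
      rw [LinearMap.smul_apply, LinearMap.sum_apply]
      congr 1
      refine Finset.sum_congr rfl fun j _ => ?_
      rw [Module.End.mul_apply, hldef, hrdef, LinearMap.pow_mulLeft, LinearMap.pow_mulRight,
        LinearMap.mulLeft_apply, LinearMap.mulRight_apply, mul_assoc]
    have hEb : (∑ i ∈ Finset.range (2 * n + 1),
        algebraMap ℚ R ((i.factorial : ℚ))⁻¹ • l ^ i) b
        = texp (R := R) (2 * n + 1) a * b := by
      rw [LinearMap.sum_apply]
      unfold texp
      rw [Finset.sum_mul]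
      refine Finset.sum_congr rfl fun i _ => ?_
      rw [LinearMap.smul_apply, hldef, LinearMap.pow_mulLeft, LinearMap.mulLeft_apply,
        smul_mul_assoc]
    rw [hMc, hEb] at happ
    exact happ.symm
  have hL : texp (R := R) (2 * n + 1) a * (1 + ε • b)
      = texp (R := R) (2 * n + 1) a + ε • (texp (R := R) (2 * n + 1) a * b) := by
    rw [mul_add, mul_one, mul_smul_comm]
  have hR : texp (R := R) (2 * n + 1) (a + ε • c) = texp (R := R) (2 * n + 1) a
      + ε • ∑ i ∈ Finset.range (2 * n + 1), algebraMap ℚ R ((i.factorial : ℚ))⁻¹ •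
          ∑ j ∈ Finset.range i, a ^ j * c * a ^ (i - 1 - j) := by
    unfold texp
    have h1 : ∀ i ∈ Finset.range (2 * n + 1),
        algebraMap ℚ R ((i.factorial : ℚ))⁻¹ • (a + ε • c) ^ i
          = algebraMap ℚ R ((i.factorial : ℚ))⁻¹ • a ^ i
            + ε • (algebraMap ℚ R ((i.factorial : ℚ))⁻¹ •
                ∑ j ∈ Finset.range i, a ^ j * c * a ^ (i - 1 - j)) := by
      intro i _
      rw [hpow i, smul_add, smul_smul, mul_comm, ← smul_smul]
    rw [Finset.sum_congr rfl h1, Finset.sum_add_distrib, ← Finset.smul_sum]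
  rw [hL, hR, hmain]

end
end
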